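/- Let X be a set of s points in generic position in P^{n_1} × ⋯ × P^{n_k}. If there exist l, m ∈ {1,...,k} (not necessarily distinct) and j ∈ N^k with j - e_l - e_m ∈ N^k such that H_X(j) = H_X(j - e_l) = H_X(j - e_l - e_m) = s, then (I_X)_j contains no minimal generators of I_X; in fact (I_X)_j = R_{e_l}(I_X)_{j - e_l} + R_{e_m}(I_X)_{j - e_m}. -/

import Mathlib

/-!
Pick a linear form `L` of degree `e_m` vanishing at none of the points (possible because `K` is
infinite). Then `L` is a nonzerodivisor modulo `I_X` on homogeneous elements, so
`(I_X)_{j-e_l} ∩ L·R_{j-e_l-e_m} = L·(I_X)_{j-e_l-e_m}`, and since `H_X = s` in both degrees a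
dimension count gives `R_{j-e_l} = (I_X)_{j-e_l} + L·R_{j-e_l-e_m}`. Multiplying by the variables
of degree `e_l`, every `f ∈ (I_X)_j` is `g + L·w` with `g ∈ R_{e_l}(I_X)_{j-e_l}`; then
`L·w ∈ I_X` forces `w ∈ I_X`, so `L·w ∈ R_{e_m}(I_X)_{j-e_m}`.
-/

open MvPolynomial

namespace MultiProjPoints

/-- The variable set of the multigraded coordinate ring of
`ℙ^{n 0} × ⋯ × ℙ^{n (k-1)}`: variables `x_{i,j}` with `i : Fin k`, `0 ≤ j ≤ n i`. -/
abbrev Var (k : ℕ) (n : Fin k → ℕ) := Σ i : Fin k, Fin (n i + 1)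

/-- The `ℕ^k`-grading weight: `deg x_{i,j} = e_i`. -/
def wt (k : ℕ) (n : Fin k → ℕ) : Var k n → (Fin k → ℕ) := fun v => Pi.single v.1 1

/-- The `i`-th standard basis vector of `ℕ^k`. -/
def e {k : ℕ} (l : Fin k) : Fin k → ℕ := Pi.single l 1

variable (K : Type) [Field K]

/-- The graded piece `R_d` of the `ℕ^k`-graded polynomial ring. -/
noncomputable def piece (k : ℕ) (n : Fin k → ℕ) (d : Fin k → ℕ) :
    Submodule K (MvPolynomial (Var k n) K) :=
  weightedHomogeneousSubmodule K (wt k n) d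

/-- `N(d) = ∏ binom (n i + d i) (d i)`, the dimension of `R_d`. -/
def NN (k : ℕ) (n : Fin k → ℕ) (d : Fin k → ℕ) : ℕ := ∏ i, (n i + d i).choose (d i)

/-- A (representative of a) point of `ℙ^{n 0} × ⋯ × ℙ^{n (k-1)}`. -/
def PointRep (k : ℕ) (n : Fin k → ℕ) := (i : Fin k) → Fin (n i + 1) → K

/-- A valid representative: every coordinate block is nonzero. -/
def IsRep {k : ℕ} {n : Fin k → ℕ} (P : PointRep K k n) : Prop := ∀ i, P i ≠ 0

/-- Two representatives define the same point of multi-projective space. -/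
def ProjEq {k : ℕ} {n : Fin k → ℕ} (P Q : PointRep K k n) : Prop :=
  ∀ i, ∃ c : K, c ≠ 0 ∧ P i = c • Q i

/-- A tuple of representatives giving `s` distinct points. -/
def SPoints {k : ℕ} {n : Fin k → ℕ} {s : ℕ} (P : Fin s → PointRep K k n) : Prop :=
  (∀ a, IsRep K (P a)) ∧ ∀ a b, a ≠ b → ¬ ProjEq K (P a) (P b)

/-- The defining ideal `I_X` of the set of points: all polynomials vanishing on
the multi-cone over the points, i.e. the intersection of the point ideals. -/
noncomputable def idealOfPoints {k : ℕ} {n : Fin k → ℕ} {s : ℕ}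
    (P : Fin s → PointRep K k n) : Ideal (MvPolynomial (Var k n) K) :=
  ⨅ (a : Fin s), ⨅ (c : Fin k → K),
    RingHom.ker (eval (fun v : Var k n => c v.1 * P a v.1 v.2))

/-- The degree-`d` piece `I_d` of an ideal, as a `K`-subspace. -/
noncomputable def idealPiece {k : ℕ} {n : Fin k → ℕ}
    (I : Ideal (MvPolynomial (Var k n) K)) (d : Fin k → ℕ) :
    Submodule K (MvPolynomial (Var k n) K) :=
  (Submodule.restrictScalars K I) ⊓ piece K k n d

/-- The multigraded Hilbert function of `X`:
`H_X(d) = dim (R/I_X)_d = dim R_d - dim (I_X)_d`. -/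
noncomputable def hilbert {k : ℕ} {n : Fin k → ℕ} {s : ℕ}
    (P : Fin s → PointRep K k n) (d : Fin k → ℕ) : ℕ :=
  NN k n d - Module.finrank K (idealPiece K (idealOfPoints K P) d)

/-- Generic position: `s` distinct points whose Hilbert function is maximal. -/
def GenericPosition {k : ℕ} {n : Fin k → ℕ} {s : ℕ} (P : Fin s → PointRep K k n) : Prop :=
  SPoints K P ∧ ∀ d : Fin k → ℕ, hilbert K P d = min (NN k n d) s

/-- `R_{e_l}·V`: the span of all products of a variable of degree `e_l`
with an element of `V`. -/
noncomputable def mulSpan {k : ℕ} {n : Fin k → ℕ} (l : Fin k)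
    (V : Submodule K (MvPolynomial (Var k n) K)) :
    Submodule K (MvPolynomial (Var k n) K) :=
  Submodule.span K {g | ∃ (m : Fin (n l + 1)) (f : MvPolynomial (Var k n) K),
    f ∈ V ∧ g = X (⟨l, m⟩ : Var k n) * f}

/-- `D = min { i ∈ ℕ^k | N(i) > s }` (minimal elements for the componentwise order). -/
def Dset (k : ℕ) (n : Fin k → ℕ) (s : ℕ) : Set (Fin k → ℕ) :=
  {i | s < NN k n i ∧ ∀ j : Fin k → ℕ, s < NN k n j → j ≤ i → j = i}

/-- The irrelevant maximal ideal of `R`, generated by all the variables. -/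
noncomputable def irrelevant (k : ℕ) (n : Fin k → ℕ) : Ideal (MvPolynomial (Var k n) K) :=
  Ideal.span (Set.range (X : Var k n → MvPolynomial (Var k n) K))

section Grading

variable {K} {k : ℕ} {n : Fin k → ℕ}

lemma weight_wt_apply (σ : Var k n →₀ ℕ) (i : Fin k) :
    Finsupp.weight (wt k n) σ i = ∑ p : Fin (n i + 1), σ ⟨i, p⟩ := by
  rw [Finsupp.weight_apply, Finsupp.sum_fintype _ _ (by simp), Finset.sum_apply,
    Fintype.sum_sigma, Finset.sum_eq_single i]
  · simp [wt]
  · intro i' _ hi'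
    simp [wt, Ne.symm hi']
  · simp

lemma X_mem_piece (v : Var k n) : (X v : MvPolynomial (Var k n) K) ∈ piece K k n (e v.1) :=
  isWeightedHomogeneous_X K (wt k n) v

lemma mul_mem_piece {d₁ d₂ : Fin k → ℕ} {f g : MvPolynomial (Var k n) K}
    (hf : f ∈ piece K k n d₁) (hg : g ∈ piece K k n d₂) : f * g ∈ piece K k n (d₁ + d₂) :=
  hf.mul hg

lemma eval_scaled_of_mem_piece {d : Fin k → ℕ} {f : MvPolynomial (Var k n) K}
    (hf : f ∈ piece K k n d) (c : Fin k → K) (q : Var k n → K) :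
    eval (fun v => c v.1 * q v) f = (∏ i, c i ^ d i) * eval q f := by
  conv_lhs => rw [← f.support_sum_monomial_coeff]
  conv_rhs => rw [← f.support_sum_monomial_coeff]
  simp only [map_sum, Finset.mul_sum, eval_monomial, mul_pow, Finsupp.prod_mul]
  refine Finset.sum_congr rfl fun σ hσ => ?_
  have hσ' : Finsupp.weight (wt k n) σ = d := hf (mem_support_iff.mp hσ)
  have hc : σ.prod (fun v a => c v.1 ^ a) = ∏ i, c i ^ d i := by
    simp_rw [← hσ', weight_wt_apply, ← Finset.prod_pow_eq_pow_sum]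
    rw [Finsupp.prod_fintype _ _ (by simp), Fintype.prod_sigma]
  rw [hc]
  ring

end Grading

section Dimension

variable {K} {k : ℕ} {n : Fin k → ℕ}

noncomputable def weightEqEquivPiSym (d : Fin k → ℕ) :
    {σ : Var k n →₀ ℕ // Finsupp.weight (wt k n) σ = d} ≃ Π i, Sym (Fin (n i + 1)) (d i) :=
  ((Finsupp.equivFunOnFinite.trans (Equiv.piCurry fun _ _ => ℕ)).subtypeEquiv
      (q := fun g => ∀ i, ∑ p, g i p = d i) fun σ => by
    simp [funext_iff, weight_wt_apply, Equiv.piCurry, Sigma.curry]).trans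
    (Equiv.subtypePiEquivPi.trans
      (Equiv.piCongrRight fun i => (Sym.equivNatSumOfFintype _ _).symm))

lemma card_weight_eq (d : Fin k → ℕ) :
    Nat.card {σ : Var k n →₀ ℕ // Finsupp.weight (wt k n) σ = d} = NN k n d := by
  rw [Nat.card_congr (weightEqEquivPiSym d), Nat.card_pi, NN]
  refine Finset.prod_congr rfl fun i _ => ?_
  rw [Nat.card_eq_fintype_card, Sym.card_sym_eq_choose, Fintype.card_fin, Nat.add_right_comm,
    Nat.add_sub_cancel]

lemma finrank_piece (d : Fin k → ℕ) : Module.finrank K (piece K k n d) = NN k n d := by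
  classical
  have : Finite {σ : Var k n →₀ ℕ | Finsupp.weight (wt k n) σ = d} :=
    Finite.of_equiv _ (weightEqEquivPiSym d).symm
  have := Fintype.ofFinite {σ : Var k n →₀ ℕ | Finsupp.weight (wt k n) σ = d}
  rw [piece, weightedHomogeneousSubmodule_eq_finsupp_supported,
    (AddMonoidAlgebra.supportedEquivFinsupp _).finrank_eq, Module.finrank_finsupp_self,
    ← Nat.card_eq_fintype_card]
  exact card_weight_eq d

instance (d : Fin k → ℕ) : FiniteDimensional K (piece K k n d) :=
  Module.finite_of_finrank_pos <| by
    rw [finrank_piece]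
    exact Finset.prod_pos fun i _ => Nat.choose_pos (Nat.le_add_left _ _)

lemma idealPiece_le_piece (I : Ideal (MvPolynomial (Var k n) K)) (d : Fin k → ℕ) :
    idealPiece K I d ≤ piece K k n d :=
  inf_le_right

instance (I : Ideal (MvPolynomial (Var k n) K)) (d : Fin k → ℕ) :
    FiniteDimensional K (idealPiece K I d) :=
  Submodule.finiteDimensional_of_le (idealPiece_le_piece I d)

end Dimension

section MulSpan

variable {K} {k : ℕ} {n : Fin k → ℕ}

lemma mulSpan_sup_le (l : Fin k) (V W : Submodule K (MvPolynomial (Var k n) K)) :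
    mulSpan K l (V ⊔ W) ≤ mulSpan K l V ⊔ mulSpan K l W := by
  rw [mulSpan, Submodule.span_le]
  rintro _ ⟨i, _, hf, rfl⟩
  obtain ⟨g, hg, h, hh, rfl⟩ := Submodule.mem_sup.mp hf
  rw [mul_add]
  exact Submodule.add_mem_sup (Submodule.subset_span ⟨i, g, hg, rfl⟩)
    (Submodule.subset_span ⟨i, h, hh, rfl⟩)

lemma mulSpan_idealPiece_le (I : Ideal (MvPolynomial (Var k n) K)) (l : Fin k)
    (d : Fin k → ℕ) : mulSpan K l (idealPiece K I d) ≤ idealPiece K I (e l + d) := by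
  rw [mulSpan, Submodule.span_le]
  rintro _ ⟨i, f, ⟨hfI, hf⟩, rfl⟩
  exact ⟨I.mul_mem_left _ hfI, mul_mem_piece (X_mem_piece ⟨l, i⟩) hf⟩

lemma mulSpan_map_mulLeft_le (L : MvPolynomial (Var k n) K) (l : Fin k) (d : Fin k → ℕ) :
    mulSpan K l ((piece K k n d).map (LinearMap.mulLeft K L))
      ≤ (piece K k n (e l + d)).map (LinearMap.mulLeft K L) := by
  rw [mulSpan, Submodule.span_le]
  rintro _ ⟨i, _, ⟨w, hw, rfl⟩, rfl⟩
  exact ⟨X ⟨l, i⟩ * w, mul_mem_piece (X_mem_piece _) hw, by simp [mul_left_comm]⟩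

lemma piece_add_le_mulSpan (l : Fin k) (d : Fin k → ℕ) :
    piece K k n (e l + d) ≤ mulSpan K l (piece K k n d) := by
  intro f hf
  rw [← f.support_sum_monomial_coeff]
  refine Submodule.sum_mem _ fun σ hσ => ?_
  have hσ' : Finsupp.weight (wt k n) σ = e l + d := hf (mem_support_iff.mp hσ)
  obtain ⟨p, hp⟩ : ∃ p, σ ⟨l, p⟩ ≠ 0 := by
    by_contra! h
    have := weight_wt_apply σ l
    simp [hσ', h, e] at this
  have hle : Finsupp.single (⟨l, p⟩ : Var k n) 1 ≤ σ :=
    Finsupp.single_le_iff.mpr (Nat.one_le_iff_ne_zero.mpr hp)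
  set τ := σ - Finsupp.single ⟨l, p⟩ 1
  have hτ : Finsupp.single ⟨l, p⟩ 1 + τ = σ := add_tsub_cancel_of_le hle
  have hτ' : Finsupp.weight (wt k n) τ = d := by
    apply add_left_cancel (a := e l)
    rw [← hσ', ← hτ, map_add]
    simp [Finsupp.weight_apply, wt, e]
  refine Submodule.subset_span ⟨p, monomial τ (coeff σ f),
    isWeightedHomogeneous_monomial _ _ _ hτ', ?_⟩
  rw [X, monomial_mul, one_mul, hτ]

lemma mul_mem_mulSpan_idealPiece {I : Ideal (MvPolynomial (Var k n) K)} {m : Fin k}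
    {d : Fin k → ℕ} {L w : MvPolynomial (Var k n) K} (hL : L ∈ piece K k n (e m))
    (hw : w ∈ idealPiece K I d) : L * w ∈ mulSpan K m (idealPiece K I d) := by
  have hL' : L ∈ mulSpan K m (piece K k n 0) := piece_add_le_mulSpan m 0 (by rwa [add_zero])
  clear hL
  induction hL' using Submodule.span_induction with
  | mem _ h =>
    obtain ⟨i, c, hc, rfl⟩ := h
    rw [mul_assoc]
    exact Submodule.subset_span ⟨i, c * w,
      ⟨I.mul_mem_left c hw.1, by simpa using mul_mem_piece hc hw.2⟩, rfl⟩
  | zero => simp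
  | add _ _ _ _ h₁ h₂ => rw [add_mul]; exact add_mem h₁ h₂
  | smul a _ _ h => rw [smul_mul_assoc]; exact Submodule.smul_mem _ a h

end MulSpan

section Colon

variable {K} {k : ℕ} {n : Fin k → ℕ} {I : Ideal (MvPolynomial (Var k n) K)}
  {L : MvPolynomial (Var k n) K} {l m : Fin k} {d : Fin k → ℕ}

lemma idealPiece_inf_map_mulLeft (hL : L ∈ piece K k n (e m))
    (hcolon : ∀ w ∈ piece K k n d, L * w ∈ I → w ∈ I) :
    idealPiece K I (e m + d) ⊓ (piece K k n d).map (LinearMap.mulLeft K L)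
      = (idealPiece K I d).map (LinearMap.mulLeft K L) := by
  apply le_antisymm
  · rintro _ ⟨hI, w, hw, rfl⟩
    exact ⟨w, ⟨hcolon w hw hI.1, hw⟩, rfl⟩
  · rintro _ ⟨w, ⟨hwI, hw⟩, rfl⟩
    exact ⟨⟨I.mul_mem_left L hwI, mul_mem_piece hL hw⟩, w, hw, rfl⟩

lemma idealPiece_sup_map_mulLeft_eq_piece {s : ℕ} (hL : L ∈ piece K k n (e m)) (hL0 : L ≠ 0)
    (hcolon : ∀ w ∈ piece K k n d, L * w ∈ I → w ∈ I)
    (hcodim : Module.finrank K (idealPiece K I (e m + d)) + s = NN k n (e m + d))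
    (hcodim' : Module.finrank K (idealPiece K I d) + s = NN k n d) :
    idealPiece K I (e m + d) ⊔ (piece K k n d).map (LinearMap.mulLeft K L)
      = piece K k n (e m + d) := by
  have hinj : Function.Injective (LinearMap.mulLeft K L) := mul_right_injective₀ hL0
  have hmap_le : (piece K k n d).map (LinearMap.mulLeft K L) ≤ piece K k n (e m + d) := by
    rintro _ ⟨w, hw, rfl⟩
    exact mul_mem_piece hL hw
  refine Submodule.eq_of_le_of_finrank_le (sup_le (idealPiece_le_piece I _) hmap_le) ?_
  have hsum := Submodule.finrank_sup_add_finrank_inf_eq (idealPiece K I (e m + d))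
    ((piece K k n d).map (LinearMap.mulLeft K L))
  rw [idealPiece_inf_map_mulLeft hL hcolon,
    ← (Submodule.equivMapOfInjective _ hinj _).finrank_eq,
    ← (Submodule.equivMapOfInjective _ hinj _).finrank_eq, finrank_piece] at hsum
  rw [finrank_piece]
  omega

lemma idealPiece_eq_mulSpan_sup_mulSpan (hL : L ∈ piece K k n (e m))
    (hcolon : ∀ w ∈ piece K k n (e l + d), L * w ∈ I → w ∈ I)
    (hcover : idealPiece K I (e m + d) ⊔ (piece K k n d).map (LinearMap.mulLeft K L)
      = piece K k n (e m + d)) :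
    idealPiece K I (e l + (e m + d))
      = mulSpan K l (idealPiece K I (e m + d)) ⊔ mulSpan K m (idealPiece K I (e l + d)) := by
  refine le_antisymm (fun f hf => ?_) (sup_le (mulSpan_idealPiece_le I l _) ?_)
  · have hsplit : piece K k n (e l + (e m + d)) ≤ mulSpan K l (idealPiece K I (e m + d))
        ⊔ (piece K k n (e l + d)).map (LinearMap.mulLeft K L) :=
      calc piece K k n (e l + (e m + d))
          ≤ mulSpan K l (piece K k n (e m + d)) := piece_add_le_mulSpan l _
        _ ≤ mulSpan K l (idealPiece K I (e m + d))
              ⊔ mulSpan K l ((piece K k n d).map (LinearMap.mulLeft K L)) := by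
          rw [← hcover]
          exact mulSpan_sup_le l _ _
        _ ≤ _ := sup_le_sup_left (mulSpan_map_mulLeft_le L l d) _
    obtain ⟨g, hg, _, ⟨w, hw, rfl⟩, rfl⟩ := Submodule.mem_sup.mp (hsplit hf.2)
    have hwI : w ∈ I := hcolon w hw <| by
      simpa using I.sub_mem hf.1 (mulSpan_idealPiece_le I l _ hg).1
    exact Submodule.add_mem_sup hg (mul_mem_mulSpan_idealPiece hL ⟨hwI, hw⟩)
  · rw [add_left_comm]
    exact mulSpan_idealPiece_le I m _

end Colon

section Points

variable {K} {k : ℕ} {n : Fin k → ℕ} {s : ℕ} {P : Fin s → PointRep K k n}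

def PointRep.coords (p : PointRep K k n) : Var k n → K := fun v => p v.1 v.2

lemma eval_coords_eq_zero_of_mem_idealOfPoints {f : MvPolynomial (Var k n) K}
    (hf : f ∈ idealOfPoints K P) (a : Fin s) : eval (P a).coords f = 0 := by
  simp only [idealOfPoints, Ideal.mem_iInf, RingHom.mem_ker] at hf
  have h := hf a 1
  simp only [Pi.one_apply, one_mul] at h
  exact h

lemma mem_idealOfPoints_of_eval_coords_eq_zero {d : Fin k → ℕ} {f : MvPolynomial (Var k n) K}
    (hf : f ∈ piece K k n d) (h : ∀ a, eval (P a).coords f = 0) : f ∈ idealOfPoints K P := by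
  simp only [idealOfPoints, Ideal.mem_iInf, RingHom.mem_ker]
  intro a c
  exact (eval_scaled_of_mem_piece hf c (P a).coords).trans (by rw [h a, mul_zero])

lemma mem_idealOfPoints_of_mul_mem {d : Fin k → ℕ} {L w : MvPolynomial (Var k n) K}
    (hL : ∀ a, eval (P a).coords L ≠ 0) (hw : w ∈ piece K k n d)
    (hLw : L * w ∈ idealOfPoints K P) : w ∈ idealOfPoints K P :=
  mem_idealOfPoints_of_eval_coords_eq_zero hw fun a =>
    (mul_eq_zero.mp (by simpa using eval_coords_eq_zero_of_mem_idealOfPoints hLw a)).resolve_left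
      (hL a)

/-- Over an infinite field the space of linear forms is not covered by the finitely many proper
subspaces `⊥` and `{L | L(P a) = 0}`. -/
lemma exists_mem_piece_forall_eval_coords_ne_zero [Infinite K] (hP : ∀ a, IsRep K (P a))
    (m : Fin k) : ∃ L ∈ piece K k n (e m), L ≠ 0 ∧ ∀ a, eval (P a).coords L ≠ 0 := by
  let V := piece K k n (e m)
  let x (i : Fin (n m + 1)) : V := ⟨X ⟨m, i⟩, X_mem_piece _⟩
  let ev (a : Fin s) : V →ₗ[K] K := (aeval (P a).coords).toLinearMap ∘ₗ V.subtype
  let H : Option (Fin s) → Submodule K V := fun o => o.elim ⊥ fun a => LinearMap.ker (ev a)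
  have hH : ∀ o, H o ≠ ⊤
    | none, htop => by
      have : Nontrivial V := nontrivial_of_ne (x 0) 0 (by simp [x, Subtype.ext_iff, X_ne_zero])
      exact bot_ne_top htop
    | some a, htop => by
      obtain ⟨i, hi⟩ := Function.ne_iff.mp (hP a m)
      have : x i ∈ H (some a) := htop ▸ Submodule.mem_top
      exact hi (by simpa [H, x, ev, PointRep.coords] using this)
  obtain ⟨L, hL⟩ : ∃ L : V, ∀ o, L ∉ H o := by
    by_contra! h
    obtain ⟨o, ho⟩ := Subspace.exists_eq_top_of_iUnion_eq_univ
      (Set.eq_univ_of_forall fun L => Set.mem_iUnion.mpr (h L))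
    exact hH o ho
  refine ⟨L, L.2, fun h0 => hL none (Subtype.ext h0), fun a h => hL (some a) ?_⟩
  simpa [H, ev] using h

lemma finrank_idealPiece_add_of_hilbert_eq {d : Fin k → ℕ} (h : hilbert K P d = s) :
    Module.finrank K (idealPiece K (idealOfPoints K P) d) + s = NN k n d := by
  have := Submodule.finrank_mono (idealPiece_le_piece (idealOfPoints K P) d)
  rw [finrank_piece] at this
  rw [hilbert] at h
  omega

end Points

theorem no_generator_of_stable_two_general (K : Type) [Field K] [IsAlgClosed K]
    (k : ℕ) (n : Fin k → ℕ) {s : ℕ} (P : Fin s → PointRep K k n)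
    (hgen : GenericPosition K P) (l m : Fin k) (j : Fin k → ℕ)
    (hj : e l + e m ≤ j)
    (h2 : hilbert K P (j - e l) = s)
    (h3 : hilbert K P (j - e l - e m) = s) :
    idealPiece K (idealOfPoints K P) j
      = mulSpan K l (idealPiece K (idealOfPoints K P) (j - e l))
        ⊔ mulSpan K m (idealPiece K (idealOfPoints K P) (j - e m)) := by
  obtain ⟨d, rfl⟩ : ∃ d, j = e l + (e m + d) :=
    ⟨j - e l - e m, by rw [← add_assoc, tsub_tsub, add_tsub_cancel_of_le hj]⟩
  have hjm : e l + (e m + d) - e m = e l + d := by rw [add_left_comm, add_tsub_cancel_left]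
  rw [hjm]
  simp only [add_tsub_cancel_left] at h2 h3 ⊢
  obtain ⟨L, hL, hL0, hLP⟩ := exists_mem_piece_forall_eval_coords_ne_zero hgen.1.1 m
  have hcolon (d' : Fin k → ℕ) : ∀ w ∈ piece K k n d',
      L * w ∈ idealOfPoints K P → w ∈ idealOfPoints K P :=
    fun _ hw => mem_idealOfPoints_of_mul_mem hLP hw
  exact idealPiece_eq_mulSpan_sup_mulSpan hL (hcolon _) <|
    idealPiece_sup_map_mulLeft_eq_piece hL hL0 (hcolon _)
      (finrank_idealPiece_add_of_hilbert_eq h2) (finrank_idealPiece_add_of_hilbert_eq h3)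

theorem no_generator_of_stable_two (K : Type) [Field K] [IsAlgClosed K] [CharZero K]
    (k : ℕ) (n : Fin k → ℕ) {s : ℕ} (P : Fin s → PointRep K k n)
    (hgen : GenericPosition K P) (l m : Fin k) (j : Fin k → ℕ)
    (hj : e l + e m ≤ j)
    (h1 : hilbert K P j = s) (h2 : hilbert K P (j - e l) = s)
    (h3 : hilbert K P (j - e l - e m) = s) :
    idealPiece K (idealOfPoints K P) j
      = mulSpan K l (idealPiece K (idealOfPoints K P) (j - e l))
        ⊔ mulSpan K m (idealPiece K (idealOfPoints K P) (j - e m)) :=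
  no_generator_of_stable_two_general K k n P hgen l m j hj h2 h3

end MultiProjPoints
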